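/- arXiv:1905.03524 — 10 statements merged into one kernel-verified Lean document; each statement's English description precedes it below -/
import Mathlib

section
/- Let N ≥ 1, let λ₀ > 0, and let V₀ : ℝ^N → ℝ^N be continuously differentiable. Suppose that for every x, ξ ∈ ℝ^N and every index i ∈ {1,…,N} one has Σ_{j=1}^N ∂_i V₀^j(x) · ξ^i · ξ^j ≤ −λ₀ · (ξ^i)². Then: (a) ∂_i V₀^i(x) ≤ −λ₀ for every x ∈ ℝ^N and every i; (b) ∂_i V₀^k(x) = 0 for every x ∈ ℝ^N and all indices k ≠ i; (c) for each i, the component function V₀^i is unbounded on ℝ^N (indeed V₀^i(x + t·e_i) ≤ V₀^i(x) − λ₀·t for t > 0, so V₀^i is unbounded below and above along the i-th coordinate direction). -/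
/-!
Testing the quadratic inequality at `ξ = eᵢ` gives `∂ᵢV₀ⁱ ≤ -λ₀`. At `ξ = eᵢ + s eₖ` its left side
is `∂ᵢV₀ⁱ + s ∂ᵢV₀ᵏ`, an affine function of `s` bounded above by `-λ₀`, so `∂ᵢV₀ᵏ = 0`. Along the
line `x + t eᵢ` the function `V₀ⁱ` then has slope at most `-λ₀`, so it decreases at least linearly;
applied at `x - t eᵢ` the same estimate shows it increases at least linearly backwards.
-/

open Filter Set

section QuadraticForm

variable {ι : Type*} [Fintype ι] [DecidableEq ι] {d : ι → ℝ} {c : ℝ} {i : ι}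

lemma le_neg_of_forall_sum_mul_le (h : ∀ ξ : ι → ℝ, ∑ j, d j * ξ i * ξ j ≤ -c * ξ i ^ 2) :
    d i ≤ -c := by
  simpa [Pi.single_apply] using h (Pi.single i 1)

lemma eq_zero_of_forall_add_mul_le {a b C : ℝ} (h : ∀ s : ℝ, a + s * b ≤ C) : b = 0 := by
  by_contra hb
  have := h ((C - a + 1) / b)
  rw [div_mul_cancel₀ _ hb] at this
  linarith

lemma eq_zero_of_forall_sum_mul_le (h : ∀ ξ : ι → ℝ, ∑ j, d j * ξ i * ξ j ≤ -c * ξ i ^ 2)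
    {k : ι} (hki : k ≠ i) : d k = 0 := by
  refine eq_zero_of_forall_add_mul_le (a := d i) (C := -c) fun s => ?_
  have := h (Pi.single i 1 + s • Pi.single k 1)
  simp only [Pi.add_apply, Pi.smul_apply] at this
  simpa [Pi.single_apply, hki, mul_add, Finset.sum_add_distrib, mul_comm] using this

end QuadraticForm

lemma apply_add_smul_le_of_fderiv_apply_le {E ι : Type*} [NormedAddCommGroup E]
    [NormedSpace ℝ E] [Fintype ι] {f : E → ι → ℝ} (hf : Differentiable ℝ f) {v : E} {i : ι}
    {c : ℝ} (hle : ∀ y, fderiv ℝ f y v i ≤ -c) (x : E) {t : ℝ} (ht : 0 ≤ t) :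
    f (x + t • v) i ≤ f x i - c * t := by
  have hderiv : ∀ s : ℝ,
      HasDerivAt (fun s : ℝ => f (x + s • v) i) (fderiv ℝ f (x + s • v) v i) s := by
    intro s
    have hline : HasDerivAt (fun s : ℝ => x + s • v) v s := by
      simpa using ((hasDerivAt_id s).smul_const v).const_add x
    exact hasDerivAt_pi.1 ((hf _).hasFDerivAt.comp_hasDerivAt s hline) i
  have := image_sub_le_mul_sub_of_deriv_le (fun s => (hderiv s).differentiableAt)
    (fun s => (hderiv s).deriv ▸ hle _) ht
  simp only [zero_smul, add_zero, sub_zero] at this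
  linarith

section LinearDecay

variable {E : Type*} [AddCommGroup E] [Module ℝ E] {g : E → ℝ} {v : E} {c : ℝ}

lemma not_bddBelow_range_of_add_smul_le (hc : 0 < c)
    (h : ∀ x (t : ℝ), 0 < t → g (x + t • v) ≤ g x - c * t) : ¬ BddBelow (range g) := by
  have hline : Tendsto (fun t : ℝ => g (t • v)) atTop atBot := by
    refine tendsto_atBot_mono' atTop ?_ (tendsto_atBot_add_const_left _ (g 0)
      (tendsto_neg_atTop_atBot.comp (tendsto_id.const_mul_atTop hc)))
    filter_upwards [eventually_gt_atTop 0] with t ht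
    simpa [sub_eq_add_neg] using h 0 t ht
  exact fun hbdd => not_bddBelow_of_tendsto_atBot hline (hbdd.mono (range_comp_subset_range _ g))

lemma not_bddAbove_range_of_add_smul_le (hc : 0 < c)
    (h : ∀ x (t : ℝ), 0 < t → g (x + t • v) ≤ g x - c * t) : ¬ BddAbove (range g) := by
  have hneg : ¬ BddBelow (range fun x => -g x) := by
    refine not_bddBelow_range_of_add_smul_le (v := -v) hc fun x t ht => ?_
    have := h (x - t • v) t ht
    simp only [smul_neg, ← sub_eq_add_neg, sub_add_cancel] at this ⊢
    linarith
  exact fun hbdd => hneg hbdd.range_neg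

end LinearDecay

theorem stmt_2_general (N : ℕ) (lam0 : ℝ) (hlam0 : 0 < lam0)
    (V₀ : (Fin N → ℝ) → (Fin N → ℝ)) (hV₀ : ContDiff ℝ 1 V₀)
    (hOAC : ∀ (x ξ : Fin N → ℝ) (i : Fin N),
      ∑ j : Fin N, fderiv ℝ V₀ x (Pi.single i 1) j * ξ i * ξ j ≤
        -lam0 * (ξ i) ^ 2) :
    (∀ (x : Fin N → ℝ) (i : Fin N),
        fderiv ℝ V₀ x (Pi.single i 1) i ≤ -lam0) ∧
    (∀ (x : Fin N → ℝ) (i k : Fin N), k ≠ i →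
        fderiv ℝ V₀ x (Pi.single i 1) k = 0) ∧
    (∀ (x : Fin N → ℝ) (i : Fin N) (t : ℝ), 0 < t →
        V₀ (x + t • (Pi.single i 1 : Fin N → ℝ)) i ≤ V₀ x i - lam0 * t) ∧
    (∀ i : Fin N,
        ¬ BddBelow (Set.range fun x : Fin N → ℝ => V₀ x i) ∧
        ¬ BddAbove (Set.range fun x : Fin N → ℝ => V₀ x i)) := by
  have hdiag : ∀ x i, fderiv ℝ V₀ x (Pi.single i 1) i ≤ -lam0 :=
    fun x i => le_neg_of_forall_sum_mul_le (hOAC x · i)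
  have hdecay : ∀ x i (t : ℝ), 0 < t →
      V₀ (x + t • (Pi.single i 1 : Fin N → ℝ)) i ≤ V₀ x i - lam0 * t :=
    fun x i _ ht => apply_add_smul_le_of_fderiv_apply_le (hV₀.differentiable one_ne_zero)
      (fun y => hdiag y i) x ht.le
  exact ⟨hdiag, fun x i _ hki => eq_zero_of_forall_sum_mul_le (hOAC x · i) hki, hdecay,
    fun i => ⟨not_bddBelow_range_of_add_smul_le hlam0 (hdecay · i),
      not_bddAbove_range_of_add_smul_le hlam0 (hdecay · i)⟩⟩

/-- Lemma B.1: if the Obtuse Angle Condition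
`∑ⱼ ∂ᵢV₀ʲ(x)·ξⁱ·ξʲ ≤ −λ₀·(ξⁱ)²` holds for all `x, ξ` and all `i`, then the
diagonal partials satisfy `∂ᵢV₀ⁱ ≤ −λ₀`, the off-diagonal partials vanish, and
each component `V₀ⁱ` decays by at least `λ₀·t` along the `i`-th coordinate
direction, hence is unbounded below and above. -/
theorem stmt_2 (N : ℕ) (hN : 1 ≤ N) (lam0 : ℝ) (hlam0 : 0 < lam0)
    (V₀ : (Fin N → ℝ) → (Fin N → ℝ)) (hV₀ : ContDiff ℝ 1 V₀)
    (hOAC : ∀ (x ξ : Fin N → ℝ) (i : Fin N),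
      ∑ j : Fin N, fderiv ℝ V₀ x (Pi.single i 1) j * ξ i * ξ j ≤
        -lam0 * (ξ i) ^ 2) :
    (∀ (x : Fin N → ℝ) (i : Fin N),
        fderiv ℝ V₀ x (Pi.single i 1) i ≤ -lam0) ∧
    (∀ (x : Fin N → ℝ) (i k : Fin N), k ≠ i →
        fderiv ℝ V₀ x (Pi.single i 1) k = 0) ∧
    (∀ (x : Fin N → ℝ) (i : Fin N) (t : ℝ), 0 < t →
        V₀ (x + t • (Pi.single i 1 : Fin N → ℝ)) i ≤ V₀ x i - lam0 * t) ∧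
    (∀ i : Fin N,
        ¬ BddBelow (Set.range fun x : Fin N → ℝ => V₀ x i) ∧
        ¬ BddAbove (Set.range fun x : Fin N → ℝ => V₀ x i)) :=
  stmt_2_general N lam0 hlam0 V₀ hV₀ hOAC
end

section
/- Let V₀, V₁, …, V_d : ℝ → ℝ be smooth functions with Σ_{j=1}^d V_j(x)² > 0 for every x ∈ ℝ, and define U₁(x) := (Σ_{j=1}^d V_j(x)²)^{1/2}. For one-dimensional vector fields define the commutator [f,g](x) := f(x)·g'(x) − g(x)·f'(x). Then U₁ is differentiable with U₁(x)·U₁'(x) = Σ_{j=1}^d V_j(x)·V_j'(x), one has the identity U₁(x)·[U₁,V₀](x) = Σ_{j=1}^d V_j(x)·[V_j,V₀](x), and consequently, if λ : ℝ → ℝ is a function such that V_j(x)·[V_j,V₀](x) ≤ −λ(x)·V_j(x)² for every j ∈ {1,…,d} and every x ∈ ℝ, then U₁(x)·[U₁,V₀](x) ≤ −λ(x)·U₁(x)² for every x ∈ ℝ. -/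
/-- Lemma B.2 (deterministic content): the combined diffusion coefficient
`U₁ = (∑ⱼ Vⱼ²)^{1/2}` satisfies `U₁·U₁' = ∑ Vⱼ·Vⱼ'`, the commutator identity
`U₁·[U₁,V₀] = ∑ Vⱼ·[Vⱼ,V₀]`, and inherits the Local Obtuse Angle Condition
from the individual noise fields. -/
theorem stmt_3 (d : ℕ) (V₀ : ℝ → ℝ) (V : Fin d → ℝ → ℝ)
    (hV₀ : ContDiff ℝ (⊤ : ℕ∞) V₀) (hV : ∀ j, ContDiff ℝ (⊤ : ℕ∞) (V j))
    (hpos : ∀ x : ℝ, 0 < ∑ j : Fin d, (V j x) ^ 2)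
    (U₁ : ℝ → ℝ) (hU₁ : ∀ x : ℝ, U₁ x = Real.sqrt (∑ j : Fin d, (V j x) ^ 2)) :
    (∀ x : ℝ, DifferentiableAt ℝ U₁ x) ∧
    (∀ x : ℝ, U₁ x * deriv U₁ x = ∑ j : Fin d, V j x * deriv (V j) x) ∧
    (∀ x : ℝ,
        U₁ x * (U₁ x * deriv V₀ x - V₀ x * deriv U₁ x) =
          ∑ j : Fin d, V j x * (V j x * deriv V₀ x - V₀ x * deriv (V j) x)) ∧
    (∀ lam : ℝ → ℝ,
        (∀ (j : Fin d) (x : ℝ),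
            V j x * (V j x * deriv V₀ x - V₀ x * deriv (V j) x) ≤
              -lam x * (V j x) ^ 2) →
        ∀ x : ℝ,
          U₁ x * (U₁ x * deriv V₀ x - V₀ x * deriv U₁ x) ≤
            -lam x * (U₁ x) ^ 2) := by
  set S : ℝ → ℝ := fun x => ∑ j : Fin d, (V j x) ^ 2 with hSdef
  have hUfun : U₁ = fun x => Real.sqrt (S x) := funext fun x => hU₁ x
  have hSderiv : ∀ x, HasDerivAt S (∑ j : Fin d, 2 * V j x * deriv (V j) x) x := by
    intro x
    have : HasDerivAt S (∑ j : Fin d, ((2 : ℕ) * V j x ^ (2 - 1) * deriv (V j) x)) x := by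
      apply HasDerivAt.fun_sum
      intro j _
      exact (((hV j).differentiable (by simp) x).hasDerivAt).pow 2
    simpa using this
  have hSne : ∀ x, S x ≠ 0 := fun x => (hpos x).ne'
  have hsq : ∀ x, Real.sqrt (S x) ≠ 0 := fun x =>
    Real.sqrt_ne_zero'.mpr (hpos x)
  have hUderiv : ∀ x, HasDerivAt U₁
      ((∑ j : Fin d, 2 * V j x * deriv (V j) x) / (2 * Real.sqrt (S x))) x := by
    intro x
    rw [hUfun]
    exact (hSderiv x).sqrt (hSne x)
  have hdiff : ∀ x : ℝ, DifferentiableAt ℝ U₁ x := fun x =>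
    (hUderiv x).differentiableAt
  have h2 : ∀ x : ℝ, U₁ x * deriv U₁ x = ∑ j : Fin d, V j x * deriv (V j) x := by
    intro x
    have ha := hsq x
    rw [(hUderiv x).deriv, hU₁ x]
    have key : Real.sqrt (S x) * ((∑ j : Fin d, 2 * V j x * deriv (V j) x) /
        (2 * Real.sqrt (S x))) = (∑ j : Fin d, 2 * V j x * deriv (V j) x) / 2 := by
      rw [eq_div_iff (two_ne_zero)]
      field_simp
    rw [show Real.sqrt (∑ j : Fin d, V j x ^ 2) = Real.sqrt (S x) from rfl, key,
      Finset.sum_div]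
    exact Finset.sum_congr rfl fun j _ => by ring
  have hU1sq : ∀ x, U₁ x ^ 2 = S x := by
    intro x
    rw [hU₁ x]
    exact Real.sq_sqrt (hpos x).le
  have h3 : ∀ x : ℝ,
      U₁ x * (U₁ x * deriv V₀ x - V₀ x * deriv U₁ x) =
        ∑ j : Fin d, V j x * (V j x * deriv V₀ x - V₀ x * deriv (V j) x) := by
    intro x
    have : U₁ x * (U₁ x * deriv V₀ x - V₀ x * deriv U₁ x)
        = U₁ x ^ 2 * deriv V₀ x - V₀ x * (U₁ x * deriv U₁ x) := by ring
    rw [this, hU1sq x, h2 x, hSdef]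
    simp only [Finset.sum_mul, Finset.mul_sum, ← Finset.sum_sub_distrib]
    congr 1
    funext j
    ring
  refine ⟨hdiff, h2, h3, ?_⟩
  intro lam hlam x
  rw [h3 x, hU1sq x]
  calc ∑ j : Fin d, V j x * (V j x * deriv V₀ x - V₀ x * deriv (V j) x)
      ≤ ∑ j : Fin d, -lam x * (V j x) ^ 2 :=
        Finset.sum_le_sum fun j _ => hlam j x
    _ = -lam x * S x := by rw [Finset.mul_sum]
end

section
/- Let V₀, f : ℝ → ℝ be smooth functions, let λ : ℝ → ℝ be continuous, and let x₀ ∈ ℝ with f(x₀) = 0. Suppose that f(x)·( f(x)·V₀'(x) − V₀(x)·f'(x) ) ≤ −λ(x)·f(x)² for every x ∈ ℝ. Then V₀(x₀)·f'(x₀) = 0; equivalently, with the commutator [f,V₀](x) := f(x)·V₀'(x) − V₀(x)·f'(x), one has [f,V₀](x₀) = 0. -/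
/-- If `f` vanishes at `x₀` and the local obtuse angle condition
`f·[f,V₀] ≤ −λ·f²` holds with `λ` continuous, then `[f,V₀](x₀) = 0`,
i.e. `V₀ x₀ · f'(x₀) = 0`. -/
theorem stmt_5 (V₀ f : ℝ → ℝ) (lam : ℝ → ℝ) (x₀ : ℝ)
    (hV₀ : ContDiff ℝ (⊤ : ℕ∞) V₀) (hf : ContDiff ℝ (⊤ : ℕ∞) f) (hlam : Continuous lam)
    (hx₀ : f x₀ = 0)
    (hLOAC : ∀ x : ℝ,
      f x * (f x * deriv V₀ x - V₀ x * deriv f x) ≤ -lam x * (f x) ^ 2) :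
    V₀ x₀ * deriv f x₀ = 0 ∧
      f x₀ * deriv V₀ x₀ - V₀ x₀ * deriv f x₀ = 0 := by
  have hfd : Differentiable ℝ f := hf.differentiable (by simp)
  have hVd : Differentiable ℝ V₀ := hV₀.differentiable (by simp)
  have hf' : Differentiable ℝ (deriv f) :=
    ((contDiff_infty_iff_deriv.mp (hf.of_le (by simp))).2).differentiable (by norm_num)
  have hV' : Differentiable ℝ (deriv V₀) :=
    ((contDiff_infty_iff_deriv.mp (hV₀.of_le (by simp))).2).differentiable (by norm_num)
  set L := deriv f x₀ with hL
  set w : ℝ → ℝ := fun x => f x * deriv V₀ x - V₀ x * deriv f x with hw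
  set h : ℝ → ℝ := fun x => f x * w x with hh
  have hwdiff : Differentiable ℝ w := (hfd.mul hV').sub (hVd.mul hf')
  have hdh : HasDerivAt h (L * w x₀ + f x₀ * deriv w x₀) x₀ :=
    ((hfd x₀).hasDerivAt).mul ((hwdiff x₀).hasDerivAt)
  have hdh' : HasDerivAt h (-(V₀ x₀ * L * L)) x₀ := by
    convert hdh using 1
    simp only [hw, hx₀]
    ring
  have hh0 : h x₀ = 0 := by simp [hh, hx₀]
  have hslope : Filter.Tendsto (slope h x₀) (nhdsWithin x₀ {x₀}ᶜ)
      (nhds (-(V₀ x₀ * L * L))) := hasDerivAt_iff_tendsto_slope.mp hdh'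
  -- the quotient of the RHS tends to 0
  have hfslope : Filter.Tendsto (slope f x₀) (nhdsWithin x₀ {x₀}ᶜ) (nhds L) :=
    hasDerivAt_iff_tendsto_slope.mp (hfd x₀).hasDerivAt
  have hcont : Filter.Tendsto (fun x => -lam x * f x) (nhdsWithin x₀ {x₀}ᶜ)
      (nhds (-lam x₀ * f x₀)) :=
    ((hlam.neg.mul hfd.continuous).tendsto x₀).mono_left nhdsWithin_le_nhds
  have hψ : Filter.Tendsto (fun x => (-lam x * (f x) ^ 2) / (x - x₀))
      (nhdsWithin x₀ {x₀}ᶜ) (nhds 0) := by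
    have := hcont.mul hfslope
    rw [hx₀] at this
    simp only [mul_zero, neg_zero, zero_mul] at this
    refine this.congr fun x => ?_
    simp only [slope, hx₀, sub_zero, vsub_eq_sub, smul_eq_mul]
    ring
  have hleq : ∀ x : ℝ, h x ≤ -lam x * (f x) ^ 2 := hLOAC
  -- right limit: derivative ≤ 0
  have hsubR : Set.Ioi x₀ ⊆ {x₀}ᶜ := fun x hx => ne_of_gt hx
  have hsubL : Set.Iio x₀ ⊆ {x₀}ᶜ := fun x hx => ne_of_lt hx
  have hR : -(V₀ x₀ * L * L) ≤ 0 := by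
    refine le_of_tendsto_of_tendsto
      (hslope.mono_left (nhdsWithin_mono _ hsubR))
      (hψ.mono_left (nhdsWithin_mono _ hsubR)) ?_
    refine Filter.eventually_of_mem self_mem_nhdsWithin fun x hx => ?_
    have hxpos : (0:ℝ) < x - x₀ := sub_pos.mpr hx
    have : slope h x₀ x = h x / (x - x₀) := by
      simp [slope, hh0, sub_zero]
      ring
    rw [this]
    exact div_le_div_of_nonneg_right (hleq x) hxpos.le
  have hLft : 0 ≤ -(V₀ x₀ * L * L) := by
    refine le_of_tendsto_of_tendsto
      (hψ.mono_left (nhdsWithin_mono _ hsubL))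
      (hslope.mono_left (nhdsWithin_mono _ hsubL)) ?_
    refine Filter.eventually_of_mem self_mem_nhdsWithin fun x hx => ?_
    have hxneg : x - x₀ < 0 := sub_neg.mpr hx
    have heq : slope h x₀ x = h x / (x - x₀) := by
      simp [slope, hh0, sub_zero]
      ring
    rw [heq]
    exact (div_le_div_right_of_neg hxneg).mpr (hleq x)
  have hz : V₀ x₀ * L * L = 0 := le_antisymm (by linarith) (by nlinarith)
  have hfin : V₀ x₀ * L = 0 := by
    rcases mul_eq_zero.mp hz with h1 | h2
    · exact h1
    · rw [h2, mul_zero]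
  exact ⟨hfin, by rw [hx₀, zero_mul, hfin, zero_sub, neg_zero]⟩
end

section
/- Let α > 0, R > 0, and let b : ℝ → ℝ be continuous with sign(x)·b(x) < 0 whenever |x| ≥ R. Define Ξ(x) := α² + α·b(x)·tanh(αx). Then: (i) for every x ∈ ℝ, b(x)·α·sinh(αx) + α²·cosh(αx) = Ξ(x)·cosh(αx), i.e. with u(x) = cosh(αx) and the generator L f = b·f' + f'' one has (L u)(x) = Ξ(x)·u(x); and (ii) Ξ is bounded above on ℝ, i.e. sup_{x∈ℝ} Ξ(x) < ∞. -/
lemma aux_deriv (α : ℝ) :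
    deriv (fun y : ℝ => Real.cosh (α * y)) = fun y : ℝ => α * Real.sinh (α * y) := by
  funext y
  have h : HasDerivAt (fun y : ℝ => Real.cosh (α * y)) (Real.sinh (α * y) * α) y := by
    have h1 : HasDerivAt (fun y : ℝ => α * y) α y := by
      simpa using (hasDerivAt_id y).const_mul α
    exact h1.cosh
  rw [h.deriv]; ring

lemma aux_deriv2 (α : ℝ) :
    deriv (deriv (fun y : ℝ => Real.cosh (α * y))) = fun y : ℝ => α ^ 2 * Real.cosh (α * y) := by
  rw [aux_deriv]
  funext y
  have h1 : HasDerivAt (fun y : ℝ => α * y) α y := by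
    simpa using (hasDerivAt_id y).const_mul α
  have h : HasDerivAt (fun y : ℝ => α * Real.sinh (α * y)) (α * (Real.cosh (α * y) * α)) y :=
    (h1.sinh).const_mul α
  rw [h.deriv]; ring

/-- Lemma B.6 (analytic content): with `u(x) = cosh(αx)` and the generator
`L f = b·f' + f''`, one has `L u = Ξ·u` where
`Ξ(x) = α² + α·b(x)·tanh(αx)`, and `Ξ` is bounded above. -/
theorem stmt_6 (α R : ℝ) (hα : 0 < α) (hR : 0 < R)
    (b : ℝ → ℝ) (hb : Continuous b)
    (hsign : ∀ x : ℝ, R ≤ |x| → Real.sign x * b x < 0) :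
    (∀ x : ℝ,
        b x * (α * Real.sinh (α * x)) + α ^ 2 * Real.cosh (α * x) =
          (α ^ 2 + α * b x * Real.tanh (α * x)) * Real.cosh (α * x)) ∧
    (∀ x : ℝ,
        b x * deriv (fun y : ℝ => Real.cosh (α * y)) x +
            deriv (deriv (fun y : ℝ => Real.cosh (α * y))) x =
          (α ^ 2 + α * b x * Real.tanh (α * x)) * Real.cosh (α * x)) ∧
    (∃ A : ℝ, ∀ x : ℝ, α ^ 2 + α * b x * Real.tanh (α * x) ≤ A) := by
  have key : ∀ x : ℝ,
      b x * (α * Real.sinh (α * x)) + α ^ 2 * Real.cosh (α * x) =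
        (α ^ 2 + α * b x * Real.tanh (α * x)) * Real.cosh (α * x) := by
    intro x
    have hc : Real.cosh (α * x) ≠ 0 := (Real.cosh_pos _).ne'
    rw [Real.tanh_eq_sinh_div_cosh]
    field_simp
    ring
  refine ⟨key, ?_, ?_⟩
  · intro x
    rw [aux_deriv2, aux_deriv]
    exact key x
  · -- boundedness
    set f : ℝ → ℝ := fun x => α * b x * Real.tanh (α * x) with hf
    have hfc : Continuous f := by
      have ht : Continuous Real.tanh := (Real.continuous_sinh.div Real.continuous_cosh fun x => (Real.cosh_pos x).ne').congr fun x => (Real.tanh_eq_sinh_div_cosh x).symm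
      exact (continuous_const.mul hb).mul (ht.comp (continuous_const.mul continuous_id))
    obtain ⟨K, hK⟩ := (isCompact_Icc (a := -R) (b := R)).exists_bound_of_continuousOn hfc.continuousOn
    refine ⟨α ^ 2 + max K 0, fun x => ?_⟩
    have : α * b x * Real.tanh (α * x) ≤ max K 0 := by
      rcases le_or_gt (|x|) R with hx | hx
      · have hmem : x ∈ Set.Icc (-R) R := abs_le.mp hx |> fun h => ⟨h.1, h.2⟩
        calc α * b x * Real.tanh (α * x) ≤ ‖f x‖ := le_abs_self _
          _ ≤ K := hK x hmem
          _ ≤ max K 0 := le_max_left _ _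
      · have hle : α * b x * Real.tanh (α * x) ≤ 0 := by
          rcases lt_trichotomy x 0 with hx0 | hx0 | hx0
          · have hsb := hsign x hx.le
            rw [Real.sign_of_neg hx0] at hsb
            have hb0 : 0 < b x := by nlinarith
            have ht : Real.tanh (α * x) < 0 := by
              rw [Real.tanh_eq_sinh_div_cosh]
              exact div_neg_of_neg_of_pos (Real.sinh_neg_iff.mpr (by nlinarith)) (Real.cosh_pos _)
            exact le_of_lt (mul_neg_of_pos_of_neg (mul_pos hα hb0) ht)
          · simp [hx0] at hx; linarith [abs_nonneg (0:ℝ)]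
          · have hsb := hsign x hx.le
            rw [Real.sign_of_pos hx0] at hsb
            have hb0 : b x < 0 := by nlinarith
            have ht : 0 < Real.tanh (α * x) := by
              rw [Real.tanh_eq_sinh_div_cosh]
              exact div_pos (Real.sinh_pos_iff.mpr (by nlinarith)) (Real.cosh_pos _)
            have := mul_pos hα ht
            nlinarith
        exact hle.trans (le_max_right _ _)
    linarith
end

section
/- For every α ∈ (1, π/2) there exists β ∈ ℝ such that for all x ∈ ℝ: −arctan(x)·sinh(x) ≤ β − α·cosh(x). -/
private lemma aux_nonneg (α : ℝ) (hα : α ∈ Set.Ioo 1 (Real.pi / 2)) (x : ℝ) (hx : 0 ≤ x) :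
    -Real.arctan x * Real.sinh x ≤ α * (1 + Real.sinh (Real.tan α)) - α * Real.cosh x := by
  obtain ⟨h1, h2⟩ := hα
  have hα0 : (0:ℝ) < α := by linarith
  have hαlt : α < Real.pi / 2 := h2
  have hαmem : α ∈ Set.Ioo (-(Real.pi/2)) (Real.pi/2) := by
    constructor
    · have := Real.pi_pos; linarith
    · exact hαlt
  have hcs : Real.cosh x - Real.sinh x = Real.exp (-x) := Real.cosh_sub_sinh x
  have hexp : Real.exp (-x) ≤ 1 := Real.exp_le_one_iff.mpr (by linarith)
  have hsinh0 : 0 ≤ Real.sinh x := Real.sinh_nonneg_iff.mpr hx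
  have harctan0 : 0 ≤ Real.arctan x := by
    simpa using Real.arctan_strictMono.monotone hx
  have htanα : Real.arctan (Real.tan α) = α := Real.arctan_tan hαmem.1 hαmem.2
  have htanpos : 0 < Real.tan α := Real.tan_pos_of_pos_of_lt_pi_div_two (by linarith) hαlt
  have hsinhtan : 0 ≤ Real.sinh (Real.tan α) := Real.sinh_nonneg_iff.mpr htanpos.le
  rcases le_or_gt α (Real.arctan x) with hcase | hcase
  · -- (α - arctan x) sinh x ≤ 0
    have h3 : (α - Real.arctan x) * Real.sinh x ≤ 0 :=
      mul_nonpos_of_nonpos_of_nonneg (by linarith) hsinh0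
    nlinarith [mul_nonneg hα0.le hsinhtan, mul_le_mul_of_nonneg_left hexp hα0.le]
  · -- arctan x < α ⇒ x < tan α ⇒ sinh x ≤ sinh (tan α)
    have hxlt : x < Real.tan α := by
      by_contra h
      push_neg at h
      have : α ≤ Real.arctan x := by
        calc α = Real.arctan (Real.tan α) := htanα.symm
        _ ≤ Real.arctan x := Real.arctan_strictMono.monotone h
      linarith
    have hsinhlt : Real.sinh x ≤ Real.sinh (Real.tan α) :=
      (Real.sinh_lt_sinh.mpr hxlt).le
    have h3 : (α - Real.arctan x) * Real.sinh x ≤ α * Real.sinh (Real.tan α) := by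
      have : (α - Real.arctan x) * Real.sinh x ≤ α * Real.sinh x := by
        nlinarith
      nlinarith
    nlinarith [mul_le_mul_of_nonneg_left hexp hα0.le]

/-- Lyapunov inequality for `cosh`: for every `α ∈ (1, π/2)` there is `β ∈ ℝ`
with `−arctan x · sinh x ≤ β − α · cosh x` for all `x`. -/
theorem stmt_7 :
    ∀ α : ℝ, α ∈ Set.Ioo 1 (Real.pi / 2) →
      ∃ β : ℝ, ∀ x : ℝ,
        -Real.arctan x * Real.sinh x ≤ β - α * Real.cosh x := by
  intro α hα
  refine ⟨α * (1 + Real.sinh (Real.tan α)), fun x => ?_⟩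
  rcases le_or_gt 0 x with hx | hx
  · exact aux_nonneg α hα x hx
  · have h := aux_nonneg α hα (-x) (by linarith)
    simpa [Real.arctan_neg, Real.sinh_neg, Real.cosh_neg, neg_mul, mul_neg] using h
end

section
/- For every y ∈ ℝ and every δ > 0: cosh(y − δ·arctan(y)) ≤ cosh(y) − δ·arctan(y)·sinh(y) + (π²/8)·δ²·( cosh(πδ/2) + cosh(y) ). -/
/-!
Taylor's theorem with Lagrange remainder gives
`cosh (y - c) = cosh y - c sinh y + c² / 2 · cosh ξ` for some `ξ` between `y - c` and `y`.
When `y` and `c` have the same sign, `|ξ| ≤ max |y| |c|`, so `cosh ξ ≤ cosh c + cosh y`.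
For `c = δ arctan y` this sign condition holds, and `|c| ≤ π δ / 2` because
`|arctan| < π / 2`.
-/

open Real Set

theorem exists_cosh_sub_eq {y c : ℝ} (hc : c ≠ 0) :
    ∃ ξ ∈ uIoo y (y - c), cosh (y - c) = cosh y - c * sinh y + c ^ 2 / 2 * cosh ξ := by
  have hne : y ≠ y - c := fun h => hc (by linarith)
  obtain ⟨ξ, hξ, h⟩ := taylor_mean_remainder_lagrange_iteratedDeriv (n := 1) hne
    contDiff_cosh.contDiffOn
  have hderiv : derivWithin cosh (uIcc y (y - c)) y = sinh y := by
    rw [differentiable_cosh.differentiableAt.derivWithin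
      (uniqueDiffOn_uIcc hne y left_mem_uIcc), Real.deriv_cosh]
  simp only [taylor_within_apply, Finset.sum_range_succ, Finset.sum_range_zero,
    iteratedDerivWithin_zero, iteratedDerivWithin_one, hderiv, iteratedDeriv_succ,
    iteratedDeriv_zero, Real.deriv_cosh, Real.deriv_sinh] at h
  refine ⟨ξ, hξ, ?_⟩
  norm_num at h
  linarith

theorem abs_le_max_abs_abs_of_mem_uIcc_sub {y c ξ : ℝ} (hyc : 0 ≤ y * c)
    (hξ : ξ ∈ uIcc y (y - c)) : |ξ| ≤ max |y| |c| := by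
  rcases mul_nonneg_iff.1 hyc with ⟨hy, hc⟩ | ⟨hy, hc⟩
  · rw [uIcc_of_ge (by linarith)] at hξ
    rw [abs_of_nonneg hy, abs_of_nonneg hc]
    exact abs_le.2 ⟨by linarith [hξ.1, le_max_right y c], hξ.2.trans (le_max_left y c)⟩
  · rw [uIcc_of_le (by linarith)] at hξ
    rw [abs_of_nonpos hy, abs_of_nonpos hc]
    exact abs_le.2 ⟨by linarith [hξ.1, le_max_left (-y) (-c)],
      by linarith [hξ.2, le_max_right (-y) (-c)]⟩

theorem cosh_sub_le {y c : ℝ} (hyc : 0 ≤ y * c) :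
    cosh (y - c) ≤ cosh y - c * sinh y + c ^ 2 / 2 * (cosh c + cosh y) := by
  rcases eq_or_ne c 0 with rfl | hc
  · simp
  obtain ⟨ξ, hξ, h⟩ := exists_cosh_sub_eq hc
  have hcosh : cosh ξ ≤ cosh c + cosh y := by
    rcases le_max_iff.1 (abs_le_max_abs_abs_of_mem_uIcc_sub hyc (uIoo_subset_uIcc_self hξ))
      with hξy | hξc
    · linarith [cosh_le_cosh.2 hξy, cosh_pos c]
    · linarith [cosh_le_cosh.2 hξc, cosh_pos y]
  rw [h]
  gcongr

theorem mul_arctan_nonneg (y : ℝ) : 0 ≤ y * arctan y := by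
  rcases le_total 0 y with hy | hy
  · exact mul_nonneg hy (arctan_zero ▸ arctan_strictMono.monotone hy)
  · exact mul_nonneg_of_nonpos_of_nonpos hy (arctan_zero ▸ arctan_strictMono.monotone hy)

/-- Second-order Taylor estimate for one Euler step of `dX = −arctan(X)dt`. -/
theorem stmt_8 :
    ∀ (y δ : ℝ), 0 < δ →
      Real.cosh (y - δ * Real.arctan y) ≤
        Real.cosh y - δ * Real.arctan y * Real.sinh y +
          (Real.pi ^ 2 / 8) * δ ^ 2 *
            (Real.cosh (Real.pi * δ / 2) + Real.cosh y) := by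
  intro y δ hδ
  set c := δ * arctan y
  have hc : |c| ≤ π * δ / 2 := by
    rw [abs_mul, abs_of_pos hδ, mul_comm π, mul_div_assoc]
    exact mul_le_mul_of_nonneg_left (abs_lt.2 (arctan_mem_Ioo y)).le hδ.le
  have hsq : c ^ 2 / 2 ≤ π ^ 2 / 8 * δ ^ 2 := by
    nlinarith [sq_abs c, abs_nonneg c]
  have hcosh : cosh c ≤ cosh (π * δ / 2) := by
    rwa [cosh_le_cosh, abs_of_pos (a := π * δ / 2) (by positivity)]
  calc cosh (y - c) ≤ cosh y - c * sinh y + c ^ 2 / 2 * (cosh c + cosh y) :=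
        cosh_sub_le (by rw [mul_left_comm]; exact mul_nonneg hδ.le (mul_arctan_nonneg y))
    _ ≤ _ := by gcongr
end

section
/- There exists δ* > 0 such that for every δ ∈ (0, δ*) and every x ∈ ℝ the following holds: if (G_n)_{n≥0} is an independent sequence of real random variables on a probability space, each distributed according to the Gaussian measure on ℝ with mean 0 and variance δ, and if Y_0 = x and Y_{n+1} = Y_n − δ·arctan(Y_n) + √2·G_n for all n ≥ 0, then sup_{n≥0} E[cosh(Y_n)] < ∞. -/
/-!
`cosh` is a Lyapunov function for the chain. Since `E[exp(±√2 G)] = exp δ` for `G ~ N(0, δ)`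
independent of `Y_n`, we get `E[cosh Y_{n+1}] = exp δ · E[cosh(Y_n - δ arctan Y_n)]`. The drift
pulls `|y| ≥ 2` towards the origin by at least `δ arctan 2`, so
`cosh(y - δ arctan y) ≤ exp(-δ arctan 2) cosh y + cosh 4`, and because `arctan 2 > 1` the
resulting affine recursion `E[cosh Y_{n+1}] ≤ exp(δ (1 - arctan 2)) E[cosh Y_n] + C` contracts.
-/

open MeasureTheory ProbabilityTheory Real
open scoped NNReal ENNReal

namespace Real

lemma one_lt_arctan_two : 1 < arctan 2 := by
  have h_tan : (1 : ℝ) / 2 < tan (1 / 2) := lt_tan (by norm_num) (by linarith [pi_gt_three])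
  have h_half : arctan 2⁻¹ < 1 / 2 := by
    calc arctan 2⁻¹ = arctan (1 / 2) := by norm_num
      _ < arctan (tan (1 / 2)) := arctan_strictMono h_tan
      _ = 1 / 2 := arctan_tan (by linarith [pi_gt_three]) (by linarith [pi_gt_three])
  linarith [arctan_inv_of_pos (by norm_num : (0 : ℝ) < 2), pi_gt_d6]

lemma cosh_sub_eq_exp_neg_mul_cosh_add (y b : ℝ) :
    cosh (y - b) = exp (-b) * cosh y + exp (-y) * sinh b := by
  simp only [cosh_eq, sinh_eq, sub_eq_add_neg, exp_add, exp_neg]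
  field_simp
  ring

lemma cosh_sub_mul_arctan_le {δ : ℝ} (hδ₀ : 0 ≤ δ) (hδ₁ : δ ≤ 1) (y : ℝ) :
    cosh (y - δ * arctan y) ≤ exp (-(δ * arctan 2)) * cosh y + cosh 4 := by
  have h_cosh_eq : cosh (y - δ * arctan y) = cosh (|y| - δ * arctan |y|) := by
    rcases abs_choice y with h | h <;> rw [h]
    rw [arctan_neg, ← cosh_neg]
    ring_nf
  have h_arctan_le : δ * arctan |y| ≤ 2 := by
    nlinarith [arctan_lt_pi_div_two |y|, pi_lt_d2, arctan_nonneg.2 (abs_nonneg y)]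
  rw [h_cosh_eq, ← cosh_abs y]
  rcases le_or_gt 2 |y| with hy | hy
  · have h_b : 0 ≤ δ * arctan |y| := mul_nonneg hδ₀ (arctan_nonneg.2 (abs_nonneg y))
    have h_exp : exp (-(δ * arctan |y|)) ≤ exp (-(δ * arctan 2)) :=
      exp_le_exp.2 (neg_le_neg (mul_le_mul_of_nonneg_left (arctan_strictMono.monotone hy) hδ₀))
    have h_sinh : exp (-|y|) * sinh (δ * arctan |y|) ≤ cosh 4 :=
      calc exp (-|y|) * sinh (δ * arctan |y|) ≤ 1 * sinh 2 :=
            mul_le_mul (exp_le_one_iff.2 (by linarith)) (sinh_le_sinh.2 h_arctan_le)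
              (sinh_nonneg_iff.2 h_b) zero_le_one
        _ ≤ cosh 4 := by
            rw [one_mul]
            exact (sinh_lt_cosh 2).le.trans (cosh_le_cosh.2 (by norm_num [abs_of_pos]))
    rw [cosh_sub_eq_exp_neg_mul_cosh_add]
    gcongr
  · have h_small : cosh (|y| - δ * arctan |y|) ≤ cosh 4 := by
      refine cosh_le_cosh.2 ?_
      rw [abs_le, abs_of_pos (by norm_num : (0 : ℝ) < 4)]
      constructor <;> nlinarith [arctan_nonneg.2 (abs_nonneg y), abs_nonneg y]
    have := mul_nonneg (exp_pos (-(δ * arctan 2))).le (cosh_pos |y|).le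
    linarith

end Real

lemma ENNReal.le_add_mul_inv_of_le_mul_add {u : ℕ → ℝ≥0∞} {ρ c : ℝ≥0∞} (hρ : ρ < 1)
    (h : ∀ n, u (n + 1) ≤ ρ * u n + c) (n : ℕ) : u n ≤ u 0 + c * (1 - ρ)⁻¹ := by
  have h_fixed : ρ * (c * (1 - ρ)⁻¹) + c = c * (1 - ρ)⁻¹ := by
    have h_ne : 1 - ρ ≠ 0 := (tsub_pos_of_lt hρ).ne'
    calc ρ * (c * (1 - ρ)⁻¹) + c = c * (1 - ρ)⁻¹ * (ρ + (1 - ρ)) := by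
          rw [mul_add, mul_assoc c _ (1 - ρ), ENNReal.inv_mul_cancel h_ne (by simp), mul_one]
          ring
      _ = c * (1 - ρ)⁻¹ := by rw [add_tsub_cancel_of_le hρ.le, mul_one]
  induction n with
  | zero => exact le_self_add
  | succ n ih =>
    calc u (n + 1) ≤ ρ * (u 0 + c * (1 - ρ)⁻¹) + c := (h n).trans (by gcongr)
      _ ≤ u 0 + c * (1 - ρ)⁻¹ := by
        rw [mul_add, add_assoc, h_fixed]
        gcongr
        exact mul_le_of_le_one_left' hρ.le

lemma ENNReal.iSup_lt_top_of_le_mul_add {u : ℕ → ℝ≥0∞} {ρ c : ℝ≥0∞} (hρ : ρ < 1) (hc : c ≠ ∞)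
    (h₀ : u 0 ≠ ∞) (h : ∀ n, u (n + 1) ≤ ρ * u n + c) : ⨆ n, u n < ∞ :=
  (iSup_le (ENNReal.le_add_mul_inv_of_le_mul_add hρ h)).trans_lt <|
    ENNReal.add_lt_top.2 ⟨h₀.lt_top, ENNReal.mul_lt_top hc.lt_top
      (ENNReal.inv_lt_top.2 (tsub_pos_of_lt hρ))⟩

section RandomRecursion

variable {Ω α β : Type*} {mΩ : MeasurableSpace Ω} {P : Measure Ω}
  [MeasurableSpace α] [MeasurableSpace β] {Φ : α → β → α} {G : ℕ → Ω → β} {Y : ℕ → Ω → α}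
  {x : α}

lemma aemeasurable_of_recursion (hΦ : Measurable (Function.uncurry Φ))
    (hG : ∀ n, AEMeasurable (G n) P) (hY₀ : ∀ ω, Y 0 ω = x)
    (hrec : ∀ n ω, Y (n + 1) ω = Φ (Y n ω) (G n ω)) (n : ℕ) : AEMeasurable (Y n) P := by
  induction n with
  | zero => rw [funext hY₀]; exact aemeasurable_const
  | succ n ih => rw [funext (hrec n)]; exact hΦ.comp_aemeasurable (ih.prodMk (hG n))

lemma measurable_iSup_comap_of_recursion (hΦ : Measurable (Function.uncurry Φ))
    (hY₀ : ∀ ω, Y 0 ω = x) (hrec : ∀ n ω, Y (n + 1) ω = Φ (Y n ω) (G n ω)) (n : ℕ) :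
    Measurable[⨆ i : Finset.range n, MeasurableSpace.comap (G i) inferInstance] (Y n) := by
  induction n with
  | zero => rw [funext hY₀]; exact measurable_const
  | succ n ih =>
    set F : ℕ → MeasurableSpace Ω :=
      fun n ↦ ⨆ i : Finset.range n, MeasurableSpace.comap (G i) inferInstance
    have h_mono : F n ≤ F (n + 1) :=
      iSup_le fun i ↦ le_iSup_of_le ⟨i, Finset.range_subset_range.2 n.le_succ i.2⟩ le_rfl
    have hG : Measurable[F (n + 1)] (G n) :=
      (comap_measurable (G n)).mono
        (le_iSup_of_le (⟨n, Finset.self_mem_range_succ n⟩ : Finset.range (n + 1)) le_rfl) le_rfl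
    rw [funext (hrec n)]
    exact hΦ.comp ((ih.mono h_mono le_rfl).prodMk hG)

lemma indepFun_of_recursion (hΦ : Measurable (Function.uncurry Φ))
    (hG : ∀ n, AEMeasurable (G n) P) (hind : iIndepFun G P) (hY₀ : ∀ ω, Y 0 ω = x)
    (hrec : ∀ n ω, Y (n + 1) ω = Φ (Y n ω) (G n ω)) (n : ℕ) : IndepFun (Y n) (G n) P := by
  have h := hind.indepFun_finset₀ (Finset.range n) {n} (by simp) hG
  rw [IndepFun_iff_Indep, MeasurableSpace.comap_process_pi,
    MeasurableSpace.comap_process_pi] at h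
  rw [IndepFun_iff_Indep]
  refine indep_of_indep_of_le_right (indep_of_indep_of_le_left h ?_) ?_
  · exact (measurable_iSup_comap_of_recursion hΦ hY₀ hrec n).comap_le
  · exact le_iSup_of_le (⟨n, Finset.mem_singleton_self n⟩ : ({n} : Finset ℕ)) le_rfl

end RandomRecursion

section Gaussian

variable {Ω : Type*} {mΩ : MeasurableSpace Ω} {P : Measure Ω}

lemma lintegral_ofReal_exp_mul_of_map_eq_gaussianReal [IsProbabilityMeasure P] {G : Ω → ℝ}
    {m : ℝ} {v : ℝ≥0} (hG : P.map G = gaussianReal m v) (t : ℝ) :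
    ∫⁻ ω, ENNReal.ofReal (exp (t * G ω)) ∂P = ENNReal.ofReal (exp (m * t + v * t ^ 2 / 2)) := by
  have h_int : Integrable (fun ω ↦ exp (t * G ω)) P :=
    mgf_pos_iff.1 (by rw [mgf_gaussianReal hG]; exact exp_pos _)
  rw [← mgf_gaussianReal hG, mgf, ofReal_integral_eq_lintegral_ofReal h_int
    (ae_of_all _ fun ω ↦ (exp_pos _).le)]

lemma lintegral_ofReal_cosh {f : Ω → ℝ} (hf : AEMeasurable f P) :
    ∫⁻ ω, ENNReal.ofReal (cosh (f ω)) ∂P =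
      ((∫⁻ ω, ENNReal.ofReal (exp (f ω)) ∂P) + ∫⁻ ω, ENNReal.ofReal (exp (-f ω)) ∂P) / 2 := by
  simp_rw [cosh_eq, ENNReal.ofReal_div_of_pos two_pos, ENNReal.ofReal_ofNat,
    ENNReal.ofReal_add (exp_pos _).le (exp_pos _).le, ENNReal.div_eq_inv_mul]
  have h_exp : AEMeasurable (fun ω ↦ ENNReal.ofReal (exp (f ω))) P := by fun_prop
  rw [lintegral_const_mul' _ _ (by simp), lintegral_add_left' h_exp]

lemma lintegral_ofReal_exp_add_of_indepFun {f g : Ω → ℝ} (hf : AEMeasurable f P)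
    (hg : AEMeasurable g P) (hfg : IndepFun f g P) :
    ∫⁻ ω, ENNReal.ofReal (exp (f ω + g ω)) ∂P =
      (∫⁻ ω, ENNReal.ofReal (exp (f ω)) ∂P) * ∫⁻ ω, ENNReal.ofReal (exp (g ω)) ∂P := by
  have h_meas : Measurable fun z ↦ ENNReal.ofReal (exp z) := measurable_exp.ennreal_ofReal
  simp_rw [exp_add, ENNReal.ofReal_mul (exp_pos _).le]
  exact lintegral_mul_eq_lintegral_mul_lintegral_of_indepFun'' (h_meas.comp_aemeasurable hf)
    (h_meas.comp_aemeasurable hg) (hfg.comp h_meas h_meas)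

lemma lintegral_ofReal_cosh_add_mul_of_map_eq_gaussianReal [IsProbabilityMeasure P]
    {f G : Ω → ℝ} {v : ℝ≥0} (hf : AEMeasurable f P) (hG : P.map G = gaussianReal 0 v)
    (hfG : IndepFun f G P) (c : ℝ) :
    ∫⁻ ω, ENNReal.ofReal (cosh (f ω + c * G ω)) ∂P =
      ENNReal.ofReal (exp (v * c ^ 2 / 2)) * ∫⁻ ω, ENNReal.ofReal (cosh (f ω)) ∂P := by
  have hG_meas : AEMeasurable G P := aemeasurable_of_map_neZero (by rw [hG]; infer_instance)
  have h_mgf (t : ℝ) := lintegral_ofReal_exp_mul_of_map_eq_gaussianReal hG t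
  have h_mul (t : ℝ) : AEMeasurable (fun ω ↦ t * G ω) P := hG_meas.const_mul t
  have h_sum : AEMeasurable (fun ω ↦ f ω + c * G ω) P := hf.add (h_mul c)
  rw [lintegral_ofReal_cosh h_sum, lintegral_ofReal_cosh hf]
  simp_rw [neg_add, ← neg_mul]
  rw [lintegral_ofReal_exp_add_of_indepFun hf (h_mul c)
      (hfG.comp measurable_id (measurable_const_mul c)),
    lintegral_ofReal_exp_add_of_indepFun (f := fun ω ↦ -f ω) hf.neg (h_mul (-c))
      (hfG.comp measurable_neg (measurable_const_mul (-c))), h_mgf, h_mgf]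
  simp only [zero_mul, zero_add, neg_sq]
  rw [mul_comm _ (ENNReal.ofReal _), mul_comm _ (ENNReal.ofReal _), ← mul_add, mul_div_assoc]

end Gaussian

section EulerScheme

variable {Ω : Type*} {mΩ : MeasurableSpace Ω} {P : Measure Ω} [IsProbabilityMeasure P]
  {δ x : ℝ} {G Y : ℕ → Ω → ℝ}

lemma lintegral_cosh_euler_succ_le (hδ₀ : 0 < δ) (hδ₁ : δ ≤ 1) (hind : iIndepFun G P)
    (hG : ∀ n, P.map (G n) = gaussianReal 0 δ.toNNReal) (hY₀ : ∀ ω, Y 0 ω = x)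
    (hrec : ∀ n ω, Y (n + 1) ω = Y n ω - δ * arctan (Y n ω) + √2 * G n ω) (n : ℕ) :
    ∫⁻ ω, ENNReal.ofReal (cosh (Y (n + 1) ω)) ∂P ≤
      ENNReal.ofReal (exp (δ * (1 - arctan 2))) * ∫⁻ ω, ENNReal.ofReal (cosh (Y n ω)) ∂P +
        ENNReal.ofReal (exp δ * cosh 4) := by
  have hΦ : Measurable (Function.uncurry fun y g : ℝ ↦ y - δ * arctan y + √2 * g) := by
    fun_prop
  have hG_meas n : AEMeasurable (G n) P :=
    aemeasurable_of_map_neZero (by rw [hG n]; infer_instance)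
  have hY : AEMeasurable (Y n) P := aemeasurable_of_recursion hΦ hG_meas hY₀ hrec n
  have hA : AEMeasurable (fun ω ↦ Y n ω - δ * arctan (Y n ω)) P := by fun_prop
  have hAG : IndepFun (fun ω ↦ Y n ω - δ * arctan (Y n ω)) (G n) P :=
    (indepFun_of_recursion hΦ hG_meas hind hY₀ hrec n).comp
      (φ := fun y ↦ y - δ * arctan y) (by fun_prop) measurable_id
  have h_mgf : ((δ.toNNReal : ℝ≥0) : ℝ) * √2 ^ 2 / 2 = δ := by
    rw [Real.coe_toNNReal _ hδ₀.le, sq_sqrt zero_le_two]; ring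
  calc ∫⁻ ω, ENNReal.ofReal (cosh (Y (n + 1) ω)) ∂P
      = ENNReal.ofReal (exp δ) *
          ∫⁻ ω, ENNReal.ofReal (cosh (Y n ω - δ * arctan (Y n ω))) ∂P := by
        simp_rw [hrec, lintegral_ofReal_cosh_add_mul_of_map_eq_gaussianReal hA (hG n) hAG, h_mgf]
    _ ≤ ENNReal.ofReal (exp δ) *
          ∫⁻ ω, ENNReal.ofReal (exp (-(δ * arctan 2))) * ENNReal.ofReal (cosh (Y n ω)) +
            ENNReal.ofReal (cosh 4) ∂P := by
        gcongr with ω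
        rw [← ENNReal.ofReal_mul (exp_pos _).le, ← ENNReal.ofReal_add (by positivity)
          (cosh_pos 4).le]
        exact ENNReal.ofReal_le_ofReal (cosh_sub_mul_arctan_le hδ₀.le hδ₁ (Y n ω))
    _ = ENNReal.ofReal (exp (δ * (1 - arctan 2))) * ∫⁻ ω, ENNReal.ofReal (cosh (Y n ω)) ∂P +
          ENNReal.ofReal (exp δ * cosh 4) := by
        rw [lintegral_add_right _ measurable_const, lintegral_const_mul' _ _ ENNReal.ofReal_ne_top,
          lintegral_const, measure_univ, mul_one, mul_add, ← mul_assoc,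
          ← ENNReal.ofReal_mul (exp_pos _).le, ← ENNReal.ofReal_mul (exp_pos _).le, ← exp_add]
        ring_nf

end EulerScheme

/-- Lemma B.5 (second assertion): there is a `δ* > 0` such that for every step
size `δ ∈ (0, δ*)` and every initial condition `x`, the Euler chain
`Y_{n+1} = Y_n − δ·arctan(Y_n) + √2·G_n` driven by i.i.d. `N(0,δ)` increments
has `sup_n E[cosh Y_n] < ∞`. -/
theorem stmt_9 :
    ∃ δstar : ℝ, 0 < δstar ∧
      ∀ δ : ℝ, 0 < δ → δ < δstar →
        ∀ (x : ℝ) (Ω : Type) (_ : MeasurableSpace Ω) (P : Measure Ω),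
          IsProbabilityMeasure P →
          ∀ G : ℕ → Ω → ℝ,
            iIndepFun G P →
            (∀ n : ℕ, Measure.map (G n) P = gaussianReal 0 δ.toNNReal) →
            ∀ Y : ℕ → Ω → ℝ,
              (∀ ω : Ω, Y 0 ω = x) →
              (∀ (n : ℕ) (ω : Ω),
                Y (n + 1) ω = Y n ω - δ * Real.arctan (Y n ω) +
                  Real.sqrt 2 * G n ω) →
              (⨆ n : ℕ, ∫⁻ ω, ENNReal.ofReal (Real.cosh (Y n ω)) ∂P) < ⊤ := by
  refine ⟨1, one_pos, fun δ hδ₀ hδ₁ x Ω _ P _ G hind hG Y hY₀ hrec ↦ ?_⟩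
  have h_contraction : ENNReal.ofReal (exp (δ * (1 - arctan 2))) < 1 :=
    ENNReal.ofReal_lt_one.2 (exp_lt_one_iff.2 (mul_neg_of_pos_of_neg hδ₀ (by
      linarith [one_lt_arctan_two])))
  refine ENNReal.iSup_lt_top_of_le_mul_add h_contraction ENNReal.ofReal_ne_top ?_
    (lintegral_cosh_euler_succ_le hδ₀ hδ₁.le hind hG hY₀ hrec)
  simp [hY₀]
end

section
/- Let δ ∈ (0,1), M ≥ 0, and let Ψ : ℝ² → ℝ satisfy |Ψ(x)| ≤ M for all x ∈ ℝ² and Ψ(x) = −1 whenever |x| ≥ 3. Let (Y_n)_{n≥0} be a sequence in ℝ² satisfying Y¹_{n+1} = Y¹_n + δ·(−Y²_n + Ψ(Y_n)·Y¹_n) and Y²_{n+1} = Y²_n + δ·(Y¹_n + Ψ(Y_n)·Y²_n). Then: (a) |Y_{n+1}|² = ((1 + Ψ(Y_n)·δ)² + δ²)·|Y_n|² for every n ≥ 0; and (b) sup_{n≥0} |Y_n|² ≤ max( |Y_0|², 9·((1+Mδ)² + δ²) ). -/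
/-- Example 6.8: for the Euler scheme of the planar rotation-with-confinement
system the squared radius satisfies a multiplicative recursion and stays
bounded uniformly in `n`. -/
theorem stmt_14 (δ M : ℝ) (hδ : δ ∈ Set.Ioo (0:ℝ) 1) (hM : 0 ≤ M)
    (Ψ : ℝ × ℝ → ℝ) (hΨbd : ∀ p : ℝ × ℝ, |Ψ p| ≤ M)
    (hΨout : ∀ p : ℝ × ℝ, 3 ≤ Real.sqrt (p.1 ^ 2 + p.2 ^ 2) → Ψ p = -1)
    (Y : ℕ → ℝ × ℝ)
    (hY1 : ∀ n : ℕ, (Y (n + 1)).1 = (Y n).1 + δ * (-(Y n).2 + Ψ (Y n) * (Y n).1))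
    (hY2 : ∀ n : ℕ, (Y (n + 1)).2 = (Y n).2 + δ * ((Y n).1 + Ψ (Y n) * (Y n).2)) :
    (∀ n : ℕ,
        (Y (n + 1)).1 ^ 2 + (Y (n + 1)).2 ^ 2 =
          ((1 + Ψ (Y n) * δ) ^ 2 + δ ^ 2) * ((Y n).1 ^ 2 + (Y n).2 ^ 2)) ∧
    (∀ n : ℕ,
        (Y n).1 ^ 2 + (Y n).2 ^ 2 ≤
          max ((Y 0).1 ^ 2 + (Y 0).2 ^ 2) (9 * ((1 + M * δ) ^ 2 + δ ^ 2))) := by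
  obtain ⟨hδ0, hδ1⟩ := hδ
  have ha : ∀ n : ℕ,
      (Y (n + 1)).1 ^ 2 + (Y (n + 1)).2 ^ 2 =
        ((1 + Ψ (Y n) * δ) ^ 2 + δ ^ 2) * ((Y n).1 ^ 2 + (Y n).2 ^ 2) := by
    intro n
    rw [hY1 n, hY2 n]; ring
  refine ⟨ha, ?_⟩
  intro n
  induction n with
  | zero => exact le_max_left _ _
  | succ n ih =>
    set R := (Y n).1 ^ 2 + (Y n).2 ^ 2 with hR
    have hR0 : 0 ≤ R := by positivity
    rw [ha n]
    by_cases h9 : 9 ≤ R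
    · -- outside region: Ψ = -1, factor < 1
      have hs : (3:ℝ) ≤ Real.sqrt R := by
        have : Real.sqrt 9 ≤ Real.sqrt R := Real.sqrt_le_sqrt h9
        calc (3:ℝ) = Real.sqrt 9 := by
              rw [show (9:ℝ) = 3^2 by norm_num, Real.sqrt_sq (by norm_num)]
          _ ≤ Real.sqrt R := this
      have hΨ := hΨout (Y n) hs
      have hfac : (1 + Ψ (Y n) * δ) ^ 2 + δ ^ 2 ≤ 1 := by
        rw [hΨ]
        nlinarith
      calc ((1 + Ψ (Y n) * δ) ^ 2 + δ ^ 2) * R ≤ 1 * R :=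
            mul_le_mul_of_nonneg_right hfac hR0
        _ = R := one_mul R
        _ ≤ _ := ih
    · push_neg at h9
      have hfac : (1 + Ψ (Y n) * δ) ^ 2 + δ ^ 2 ≤ (1 + M * δ) ^ 2 + δ ^ 2 := by
        have h1 : |1 + Ψ (Y n) * δ| ≤ 1 + M * δ := by
          have := hΨbd (Y n)
          have habs : |Ψ (Y n) * δ| ≤ M * δ := by
            rw [abs_mul, abs_of_pos hδ0]
            exact mul_le_mul_of_nonneg_right this hδ0.le
          calc |1 + Ψ (Y n) * δ| ≤ |(1:ℝ)| + |Ψ (Y n) * δ| := abs_add_le _ _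
            _ ≤ 1 + M * δ := by rw [abs_one]; linarith
        have := sq_abs (1 + Ψ (Y n) * δ)
        nlinarith [abs_nonneg (1 + Ψ (Y n) * δ)]
      have hfac0 : 0 ≤ (1 + Ψ (Y n) * δ) ^ 2 + δ ^ 2 := by positivity
      have : ((1 + Ψ (Y n) * δ) ^ 2 + δ ^ 2) * R ≤ ((1 + M * δ) ^ 2 + δ ^ 2) * 9 := by
        apply mul_le_mul hfac h9.le hR0
        positivity
      calc ((1 + Ψ (Y n) * δ) ^ 2 + δ ^ 2) * R ≤ 9 * ((1 + M * δ) ^ 2 + δ ^ 2) := by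
            linarith [this]
        _ ≤ _ := le_max_right _ _
end

section
/- There exists λ₀ > 0 such that for all x ∈ ℝ: 2/(1+x²) − 1/4 + (1/2)·arctan(x)·tanh(x/2) ≥ 2·λ₀. -/
lemma tanh_half (x : ℝ) : Real.tanh (x/2) = (Real.exp x - 1)/(Real.exp x + 1) := by
  rw [Real.tanh_eq_sinh_div_cosh, Real.sinh_eq, Real.cosh_eq]
  have h1 : Real.exp (x/2) * Real.exp (x/2) = Real.exp x := by
    rw [← Real.exp_add]; ring_nf
  have h2 : Real.exp (-(x/2)) = 1 / Real.exp (x/2) := by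
    rw [Real.exp_neg]; field_simp
  rw [h2]
  have hp := Real.exp_pos (x/2)
  have hq := Real.exp_pos x
  field_simp
  nlinarith [h1]

lemma tanh_lb {x a : ℝ} (ha : 0 < a) (h : a ≤ Real.exp x) :
    (a - 1)/(a + 1) ≤ Real.tanh (x/2) := by
  rw [tanh_half]
  have hq := Real.exp_pos x
  rw [div_le_div_iff₀ (by linarith) (by linarith)]
  nlinarith

lemma key (x : ℝ) (hx : 0 ≤ x) :
    2 / (1 + x ^ 2) - 1 / 4 +
        (1 / 2) * Real.arctan x * Real.tanh (x / 2) ≥ 1/25 := by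
  have harct : 0 ≤ Real.arctan x := by
    rw [← Real.arctan_zero]; exact Real.arctan_strictMono.monotone hx
  have htanh : 0 ≤ Real.tanh (x/2) := by
    rw [tanh_half]
    have := Real.one_le_exp hx
    apply div_nonneg <;> linarith
  have hpisq : Real.pi ≥ 3.14 := by linarith [Real.pi_gt_d6]
  rcases le_or_gt x 1 with h1 | h1
  · have : 1 + x ^ 2 ≤ 2 := by nlinarith
    have h2 : 2 / (1 + x ^ 2) ≥ 1 := by
      rw [ge_iff_le, le_div_iff₀ (by positivity)]; linarith
    nlinarith
  · have ha : Real.arctan x ≥ Real.pi / 4 := by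
      rw [← Real.arctan_one]
      exact Real.arctan_strictMono.monotone h1.le
    rcases le_or_gt x 2 with h2 | h2
    · -- 1 < x ≤ 2 : exp x ≥ e ≥ 2.71, tanh(x/2) ≥ 1.71/3.71
      have he : (2.7182818283 : ℝ) ≤ Real.exp x := by
        calc (2.7182818283 : ℝ) ≤ Real.exp 1 := Real.exp_one_gt_d9.le
          _ ≤ Real.exp x := Real.exp_le_exp.mpr h1.le
      have ht := tanh_lb (by norm_num) he
      have hfrac : 2 / (1 + x ^ 2) ≥ 2/5 := by
        rw [ge_iff_le, div_le_div_iff₀ (by norm_num) (by positivity)]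
        nlinarith
      have ht' : Real.tanh (x/2) ≥ 0.46 := by
        refine le_trans ?_ ht; norm_num
      nlinarith [mul_le_mul ha.le ht'.le (by norm_num) harct]
    · have he : (7.38905 : ℝ) ≤ Real.exp x := by
        have h2' : Real.exp 2 ≤ Real.exp x := Real.exp_le_exp.mpr h2.le
        have : (7.38905 : ℝ) ≤ Real.exp 2 := by
          have : Real.exp 2 = Real.exp 1 * Real.exp 1 := by
            rw [← Real.exp_add]; norm_num
          nlinarith [Real.exp_one_gt_d9]
        linarith
      have ht := tanh_lb (by norm_num) he
      have ht' : Real.tanh (x/2) ≥ 0.76 := by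
        refine le_trans ?_ ht; norm_num
      have hfrac : 0 < 2 / (1 + x ^ 2) := by positivity
      nlinarith [mul_le_mul ha.le ht'.le (by norm_num) harct]

/-- Spectral-gap-type inequality `2λ(x) − Ξ(x) ≥ 2lam0` for the SDE
`dX = −arctan(X)dt + √2 dB`, with `λ(x) = 1/(1+x²)` and
`Ξ(x) = 1/4 − (1/2)·arctan(x)·tanh(x/2)`. -/
theorem stmt_16 :
    ∃ lam0 : ℝ, 0 < lam0 ∧ ∀ x : ℝ,
      2 / (1 + x ^ 2) - 1 / 4 +
          (1 / 2) * Real.arctan x * Real.tanh (x / 2) ≥ 2 * lam0 := by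
  refine ⟨1/50, by norm_num, fun x => ?_⟩
  have h : ∀ y : ℝ, 0 ≤ y → 2 / (1 + y ^ 2) - 1 / 4 +
      (1 / 2) * Real.arctan y * Real.tanh (y / 2) ≥ 2 * (1/50) := by
    intro y hy
    have := key y hy
    linarith
  rcases le_or_gt 0 x with hx | hx
  · exact h x hx
  · have := h (-x) (by linarith)
    rw [Real.arctan_neg, neg_div, Real.tanh_neg, neg_pow] at this
    simpa using this
end

section
/- Let δ > 0 and let (G_n)_{n≥0} be an independent sequence of real random variables on a probability space, each distributed according to the Gaussian measure on ℝ with mean 0 and variance δ, and let Y_0 be a real random variable independent of (G_n)_{n≥0}. Define Y_{n+1} = Y_n − δ·(Y_n³ + Y_n) + √2·G_n for all n ≥ 0, with second moments E[Y_n²] taken in [0,∞]. If E[Y_0²] ≥ 4 + 4/δ², then E[Y_n²] → ∞ as n → ∞. -/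
/-!
Write `m n = E[Y_n²]`. Pathwise, the cubic drift of one Euler step gives
`δ²/8 · Y_n⁶ ≤ Y_{n+1}² + 2 G_n² + (1 + δ)³/δ`. Taking expectations, with Jensen's
inequality `m n ³ ≤ E[Y_n⁶]` and `E[G_n²] = δ`, yields
`δ²/8 · m n ³ ≤ m (n + 1) + 2δ + (1 + δ)³/δ`. Once `m n ≥ 4 + 4/δ²` the cubic term dominates
and `m (n + 1) ≥ 2 m n`, so the threshold is never left again and `m n` grows like `2ⁿ`.
-/

open MeasureTheory ProbabilityTheory Filter
open scoped ENNReal NNReal Topology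

lemma mul_le_cube_add_of_pos {δ t : ℝ} (hδ : 0 < δ) (ht : 0 ≤ t) :
    (1 + δ) ^ 2 * t / 2 ≤ δ ^ 2 * t ^ 3 / 8 + (1 + δ) ^ 3 / δ := by
  -- `(1 + δ)³/δ` bounds the left side on `δ t ≤ 2 (1 + δ)`; beyond it the cubic term wins.
  rcases le_or_gt (δ * t) (2 * (1 + δ)) with hsmall | hlarge
  · have : (1 + δ) ^ 2 * t / 2 ≤ (1 + δ) ^ 3 / δ := by
      rw [le_div_iff₀ hδ]; nlinarith [sq_nonneg (1 + δ)]
    nlinarith [pow_nonneg ht 3]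
  · have : (1 + δ) ^ 2 * t / 2 ≤ δ ^ 2 * t ^ 3 / 8 := by
      nlinarith [mul_pow δ t 2, pow_nonneg ht 1, mul_le_mul_of_nonneg_right
        (pow_le_pow_left₀ (by positivity) hlarge.le 2) ht]
    have : 0 ≤ (1 + δ) ^ 3 / δ := by positivity
    linarith

lemma pow_six_le_sq_euler_step_add {δ : ℝ} (hδ : 0 < δ) (x c : ℝ) :
    δ ^ 2 / 8 * x ^ 6 ≤ (x - δ * (x ^ 3 + x) + c) ^ 2 + c ^ 2 + (1 + δ) ^ 3 / δ := by
  set a := x - δ * (x ^ 3 + x)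
  have hc : a ^ 2 / 2 ≤ (a + c) ^ 2 + c ^ 2 := by nlinarith [sq_nonneg (a + 2 * c)]
  have hcubic : δ ^ 2 * x ^ 6 / 2 - (1 - δ) ^ 2 * x ^ 2 ≤ a ^ 2 := by
    nlinarith [sq_nonneg (δ * x ^ 3 - 2 * (1 - δ) * x)]
  have hlin := mul_le_cube_add_of_pos hδ (sq_nonneg x)
  nlinarith [sq_nonneg x, mul_nonneg hδ.le (sq_nonneg x)]

lemma two_mul_add_le_cube {δ r : ℝ} (hδ : 0 < δ) (hr : 4 + 4 / δ ^ 2 ≤ r) :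
    2 * r + (2 * δ + (1 + δ) ^ 3 / δ) ≤ δ ^ 2 / 8 * r ^ 3 := by
  have hq : 4 * δ ^ 2 + 4 ≤ δ ^ 2 * r := by
    have := mul_le_mul_of_nonneg_left hr (sq_nonneg δ)
    rw [mul_add, mul_div_cancel₀ _ (by positivity)] at this; linarith
  have hr4 : 4 ≤ r := le_trans (by simp only [le_add_iff_nonneg_right]; positivity) hr
  have hqr : (4 * δ ^ 2 + 4) * r ≤ δ ^ 2 * r * r := mul_le_mul_of_nonneg_right hq (by linarith)
  have hqq : (4 * δ ^ 2 + 4) * ((4 * δ ^ 2 + 4) * r) ≤ δ ^ 2 * r * (δ ^ 2 * r * r) :=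
    mul_le_mul hq hqr (by positivity) (by positivity)
  rw [← mul_le_mul_iff_right₀ (by positivity : 0 < 8 * δ ^ 2)]
  have hexpand : 8 * δ ^ 2 * (2 * r + (2 * δ + (1 + δ) ^ 3 / δ))
      = 16 * (δ ^ 2 * r) + 16 * δ ^ 3 + 8 * δ * (1 + δ) ^ 3 := by
    field_simp; ring
  rw [hexpand]
  nlinarith [pow_pos hδ 3, pow_pos hδ 4, sq_nonneg (δ - 1)]

lemma pow_lintegral_le_lintegral_pow {Ω : Type*} [MeasurableSpace Ω] (P : Measure Ω)
    [IsProbabilityMeasure P] (W : Ω → ℝ≥0∞) (n : ℕ) :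
    (∫⁻ ω, W ω ∂P) ^ n ≤ ∫⁻ ω, W ω ^ n ∂P := by
  rcases Nat.eq_zero_or_pos n with rfl | hn
  · simp
  -- `W` need not be measurable: pass to a measurable minorant with the same integral.
  obtain ⟨g, hgm, hgW, hgeq⟩ := exists_measurable_le_lintegral_eq P W
  have hn' : (0 : ℝ) < n := by exact_mod_cast hn
  have hL1 : ∫⁻ ω, g ω ∂P ≤ (∫⁻ ω, g ω ^ (n : ℝ) ∂P) ^ (n : ℝ)⁻¹ := by
    simpa [eLpNorm', enorm_eq_self] using
      eLpNorm'_le_eLpNorm'_of_exponent_le one_pos (Nat.one_le_cast.mpr hn) P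
        hgm.aestronglyMeasurable
  calc (∫⁻ ω, W ω ∂P) ^ n = (∫⁻ ω, g ω ∂P) ^ (n : ℝ) := by
        rw [hgeq, ENNReal.rpow_natCast]
    _ ≤ ∫⁻ ω, g ω ^ (n : ℝ) ∂P := (ENNReal.le_rpow_inv_iff hn').mp hL1
    _ ≤ ∫⁻ ω, W ω ^ n ∂P := lintegral_mono fun ω => by
        rw [ENNReal.rpow_natCast]; exact pow_le_pow_left₀ zero_le (hgW ω) n

lemma lintegral_ofReal_sq_gaussianReal (v : ℝ≥0) :
    ∫⁻ x, ENNReal.ofReal (x ^ 2) ∂gaussianReal 0 v = v := by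
  have h := evariance_eq_lintegral_ofReal id (gaussianReal 0 v)
  rw [← ofReal_variance (memLp_id_gaussianReal 2), variance_id_gaussianReal] at h
  simpa [integral_id_gaussianReal] using h.symm

lemma tendsto_nhds_top_of_two_mul_le {m : ℕ → ℝ≥0∞} {T : ℝ≥0∞} (hT : T ≠ 0) (h0 : T ≤ m 0)
    (hstep : ∀ n, T ≤ m n → 2 * m n ≤ m (n + 1)) : Tendsto m atTop (𝓝 ∞) := by
  have hgrowth : ∀ n, 2 ^ n * T ≤ m n := by
    intro n
    induction n with
    | zero => simpa using h0
    | succ n ih =>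
      have hT : T ≤ m n := le_trans (le_mul_of_one_le_left zero_le (one_le_pow₀ one_le_two)) ih
      calc 2 ^ (n + 1) * T = 2 * (2 ^ n * T) := by ring
        _ ≤ 2 * m n := mul_le_mul_right ih 2
        _ ≤ m (n + 1) := hstep n hT
  refine tendsto_nhds_top_mono ?_ (Eventually.of_forall hgrowth)
  simpa [ENNReal.top_mul hT] using ENNReal.Tendsto.mul_const (b := T)
    (ENNReal.tendsto_pow_atTop_nhds_top_iff.mpr ENNReal.one_lt_two) (.inl ENNReal.top_ne_zero)

lemma two_mul_le_of_cube_le {δ : ℝ} (hδ : 0 < δ) {m m' : ℝ≥0∞}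
    (hm : ENNReal.ofReal (4 + 4 / δ ^ 2) ≤ m)
    (h : ENNReal.ofReal (δ ^ 2 / 8) * m ^ 3 ≤ m' + ENNReal.ofReal (2 * δ + (1 + δ) ^ 3 / δ)) :
    2 * m ≤ m' := by
  set C := 2 * δ + (1 + δ) ^ 3 / δ
  rcases eq_or_ne m ∞ with rfl | hm_top
  · have hδ8 : ENNReal.ofReal (δ ^ 2 / 8) ≠ 0 := by
      simp only [ne_eq, ENNReal.ofReal_eq_zero, not_le]; positivity
    rw [ENNReal.top_pow three_ne_zero, ENNReal.mul_top hδ8, top_le_iff, ENNReal.add_eq_top] at h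
    simpa using h
  · obtain ⟨r, hr0, rfl⟩ : ∃ r : ℝ, 0 ≤ r ∧ m = ENNReal.ofReal r :=
      ⟨m.toReal, ENNReal.toReal_nonneg, (ENNReal.ofReal_toReal hm_top).symm⟩
    have hr := (ENNReal.ofReal_le_ofReal_iff hr0).mp hm
    have hC : 0 ≤ C := by positivity
    refine (ENNReal.add_le_add_iff_right (ENNReal.ofReal_ne_top (r := C))).mp ?_
    calc 2 * ENNReal.ofReal r + ENNReal.ofReal C = ENNReal.ofReal (2 * r + C) := by
          rw [ENNReal.ofReal_add (by positivity) hC, ENNReal.ofReal_mul zero_le_two,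
            ENNReal.ofReal_ofNat]
      _ ≤ ENNReal.ofReal (δ ^ 2 / 8 * r ^ 3) :=
          ENNReal.ofReal_le_ofReal (two_mul_add_le_cube hδ hr)
      _ ≤ m' + ENNReal.ofReal C := by
          rwa [ENNReal.ofReal_mul (by positivity), ENNReal.ofReal_pow hr0]

lemma lintegral_euler_step {Ω : Type*} [MeasurableSpace Ω] (P : Measure Ω)
    [IsProbabilityMeasure P] {δ : ℝ} (hδ : 0 < δ) (X c : Ω → ℝ) (hc : AEMeasurable c P) :
    ENNReal.ofReal (δ ^ 2 / 8) * (∫⁻ ω, ENNReal.ofReal (X ω ^ 2) ∂P) ^ 3 ≤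
      ∫⁻ ω, ENNReal.ofReal ((X ω - δ * (X ω ^ 3 + X ω) + c ω) ^ 2) ∂P
        + ∫⁻ ω, ENNReal.ofReal (c ω ^ 2) ∂P + ENNReal.ofReal ((1 + δ) ^ 3 / δ) := by
  have hsix : ∀ ω, ENNReal.ofReal (δ ^ 2 / 8) * ENNReal.ofReal (X ω ^ 2) ^ 3
      = ENNReal.ofReal (δ ^ 2 / 8 * X ω ^ 6) := fun ω => by
    rw [← ENNReal.ofReal_pow (sq_nonneg _), ← ENNReal.ofReal_mul (by positivity), ← pow_mul]
  have hpt : ∀ ω, ENNReal.ofReal (δ ^ 2 / 8 * X ω ^ 6) ≤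
      ENNReal.ofReal ((X ω - δ * (X ω ^ 3 + X ω) + c ω) ^ 2) + ENNReal.ofReal (c ω ^ 2)
        + ENNReal.ofReal ((1 + δ) ^ 3 / δ) := fun ω => by
    rw [← ENNReal.ofReal_add (sq_nonneg _) (sq_nonneg _),
      ← ENNReal.ofReal_add (by positivity) (by positivity)]
    exact ENNReal.ofReal_le_ofReal (pow_six_le_sq_euler_step_add hδ (X ω) (c ω))
  calc ENNReal.ofReal (δ ^ 2 / 8) * (∫⁻ ω, ENNReal.ofReal (X ω ^ 2) ∂P) ^ 3
      ≤ ENNReal.ofReal (δ ^ 2 / 8) * ∫⁻ ω, ENNReal.ofReal (X ω ^ 2) ^ 3 ∂P :=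
        mul_le_mul_right (pow_lintegral_le_lintegral_pow P _ 3) _
    _ = ∫⁻ ω, ENNReal.ofReal (δ ^ 2 / 8 * X ω ^ 6) ∂P := by
        rw [← lintegral_const_mul' _ _ ENNReal.ofReal_ne_top]; simp_rw [hsix]
    _ ≤ _ := lintegral_mono hpt
    _ = _ := by
        rw [lintegral_add_right' _ aemeasurable_const, lintegral_add_right' _ (by fun_prop),
          lintegral_const, measure_univ, mul_one]

theorem stmt_17_general {Ω : Type*} [MeasurableSpace Ω] (P : Measure Ω)
    [IsProbabilityMeasure P] (δ : ℝ) (hδ : 0 < δ)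
    (Y : ℕ → Ω → ℝ) (G : ℕ → Ω → ℝ)
    (hG : ∀ n : ℕ, Measure.map (G n) P = gaussianReal 0 δ.toNNReal)
    (hY : ∀ (n : ℕ) (ω : Ω),
      Y (n + 1) ω = Y n ω - δ * ((Y n ω) ^ 3 + Y n ω) + Real.sqrt 2 * G n ω)
    (hY0 : ENNReal.ofReal (4 + 4 / δ ^ 2) ≤
      ∫⁻ ω, ENNReal.ofReal ((Y 0 ω) ^ 2) ∂P) :
    Tendsto (fun n : ℕ => ∫⁻ ω, ENNReal.ofReal ((Y n ω) ^ 2) ∂P) atTop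
      (nhds ⊤) := by
  have hnoise : ∀ n, HasLaw (fun ω => √2 * G n ω) (gaussianReal 0 (2 * δ).toNNReal) P := by
    intro n
    have hlaw : HasLaw (G n) (gaussianReal 0 δ.toNNReal) P :=
      ⟨.of_map_ne_zero (by rw [hG n]; exact IsProbabilityMeasure.ne_zero _), hG n⟩
    convert gaussianReal_const_mul hlaw √2 using 2
    · simp
    · ext; simp [hδ.le]
  have hT : ENNReal.ofReal (4 + 4 / δ ^ 2) ≠ 0 := by
    simp only [ne_eq, ENNReal.ofReal_eq_zero, not_le]; positivity
  refine tendsto_nhds_top_of_two_mul_le hT hY0 fun n hn => two_mul_le_of_cube_le hδ hn ?_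
  have hsq : ∫⁻ ω, ENNReal.ofReal ((√2 * G n ω) ^ 2) ∂P = ENNReal.ofReal (2 * δ) :=
    ((hnoise n).lintegral_comp (f := fun x => ENNReal.ofReal (x ^ 2)) (by fun_prop)).trans
      (lintegral_ofReal_sq_gaussianReal _)
  calc _ ≤ _ := lintegral_euler_step P hδ (Y n) _ (hnoise n).aemeasurable
    _ = _ := by
      simp only [← hY, hsq]
      rw [add_assoc, ← ENNReal.ofReal_add (by positivity) (by positivity)]

/-- Example 6.6 (moment blow-up): for the Euler scheme
`Y_{n+1} = Y_n − δ(Y_n³ + Y_n) + √2·G_n` with i.i.d. `N(0,δ)` increments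
independent of the initial condition, if `E[Y_0²] ≥ 4 + 4/δ²`, then
`E[Y_n²] → ∞`. -/
theorem stmt_17 {Ω : Type*} [MeasurableSpace Ω] (P : Measure Ω)
    [IsProbabilityMeasure P] (δ : ℝ) (hδ : 0 < δ)
    (Y : ℕ → Ω → ℝ) (G : ℕ → Ω → ℝ)
    (hindep : iIndepFun
      (fun n : ℕ => Nat.rec (motive := fun _ => Ω → ℝ) (Y 0) (fun k _ => G k) n) P)
    (hG : ∀ n : ℕ, Measure.map (G n) P = gaussianReal 0 δ.toNNReal)
    (hY : ∀ (n : ℕ) (ω : Ω),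
      Y (n + 1) ω = Y n ω - δ * ((Y n ω) ^ 3 + Y n ω) + Real.sqrt 2 * G n ω)
    (hY0 : ENNReal.ofReal (4 + 4 / δ ^ 2) ≤
      ∫⁻ ω, ENNReal.ofReal ((Y 0 ω) ^ 2) ∂P) :
    Tendsto (fun n : ℕ => ∫⁻ ω, ENNReal.ofReal ((Y n ω) ^ 2) ∂P) atTop
      (nhds ⊤) :=
  stmt_17_general P δ hδ Y G hG hY hY0
end
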